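/- Let p ∈ [1,∞), let I be a nonempty set, and let f, g ∈ ℓ^p(I)^+. Then f ≺_s g and g ≺_w f hold if and only if there exists a permutation operator P on ℓ^p(I) such that g = Pf. -/

import Mathlib

open scoped ENNReal BigOperators

noncomputable section

/-- ℓᵖ(I) with real scalars. -/
abbrev Lp (I : Type*) (p : ℝ≥0∞) := lp (fun _ : I => ℝ) p

/-- The standard basis vector `e_j` of `ℓᵖ(I)`. -/
def stdVec {I : Type*} (p : ℝ≥0∞) (j : I) : Lp I p :=
  haveI := Classical.decEq I
  lp.single p j 1

/-- A bounded operator on ℓᵖ(I) is positive if it maps the positive cone into itself. -/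
def IsPos {I : Type*} {p : ℝ≥0∞} [Fact (1 ≤ p)] (A : Lp I p →L[ℝ] Lp I p) : Prop :=
  ∀ f : Lp I p, (∀ i, 0 ≤ f i) → ∀ i, 0 ≤ A f i

/-- Doubly stochastic operator on ℓᵖ(I). -/
def DoublyStochastic {I : Type*} {p : ℝ≥0∞} [Fact (1 ≤ p)]
    (A : Lp I p →L[ℝ] Lp I p) : Prop :=
  IsPos A ∧ (∀ i : I, HasSum (fun j : I => A (stdVec p j) i) 1)
          ∧ (∀ j : I, HasSum (fun i : I => A (stdVec p j) i) 1)

/-- Doubly substochastic operator on ℓᵖ(I) (finite partial sums formulation). -/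
def DoublySubstochastic {I : Type*} {p : ℝ≥0∞} [Fact (1 ≤ p)]
    (A : Lp I p →L[ℝ] Lp I p) : Prop :=
  IsPos A ∧ (∀ i : I, ∀ s : Finset I, ∑ j ∈ s, A (stdVec p j) i ≤ 1)
          ∧ (∀ j : I, ∀ s : Finset I, ∑ i ∈ s, A (stdVec p j) i ≤ 1)

/-- Increasable doubly substochastic operator on ℓᵖ(I). -/
def IncreasableDsS {I : Type*} {p : ℝ≥0∞} [Fact (1 ≤ p)]
    (A : Lp I p →L[ℝ] Lp I p) : Prop :=
  IsPos A ∧ ∃ A₁ : Lp I p →L[ℝ] Lp I p, DoublyStochastic A₁ ∧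
    ∀ i j : I, A (stdVec p j) i ≤ A₁ (stdVec p j) i

/-- Majorization: `f ≺ g`. -/
def Maj {I : Type*} {p : ℝ≥0∞} [Fact (1 ≤ p)] (f g : Lp I p) : Prop :=
  ∃ D : Lp I p →L[ℝ] Lp I p, DoublyStochastic D ∧ f = D g

/-- Weak majorization: `f ≺_w g`. -/
def MajW {I : Type*} {p : ℝ≥0∞} [Fact (1 ≤ p)] (f g : Lp I p) : Prop :=
  ∃ D : Lp I p →L[ℝ] Lp I p, DoublySubstochastic D ∧ f = D g

/-- Submajorization: `f ≺_s g`. -/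
def MajS {I : Type*} {p : ℝ≥0∞} [Fact (1 ≤ p)] (f g : Lp I p) : Prop :=
  ∃ D : Lp I p →L[ℝ] Lp I p, IncreasableDsS D ∧ f = D g

/-- Permutation operator on ℓᵖ(I). -/
def IsPermutationOp {I : Type*} {p : ℝ≥0∞} [Fact (1 ≤ p)]
    (P : Lp I p →L[ℝ] Lp I p) : Prop :=
  ∃ θ : I ≃ I, ∀ j : I, P (stdVec p j) = stdVec p (θ j)

/-- `P` is the operator `P_θ` associated with the injection `θ : I → I`,
i.e. `P f = ∑_{k ∈ I} f(k) e_{θ(k)}`. -/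
def IsPTheta {I : Type*} {p : ℝ≥0∞} [Fact (1 ≤ p)] (θ : I → I)
    (P : Lp I p →L[ℝ] Lp I p) : Prop :=
  (∀ f : Lp I p, ∀ k : I, P f (θ k) = f k) ∧
  (∀ f : Lp I p, ∀ i : I, i ∉ Set.range θ → P f i = 0)

/-- `T` preserves weak majorization on the positive cone. -/
def PreservesMajW {I : Type*} {p : ℝ≥0∞} [Fact (1 ≤ p)]
    (T : Lp I p →L[ℝ] Lp I p) : Prop :=
  ∀ f g : Lp I p, (∀ i, 0 ≤ f i) → (∀ i, 0 ≤ g i) → MajW f g → MajW (T f) (T g)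

/-- `T` preserves submajorization on the positive cone. -/
def PreservesMajS {I : Type*} {p : ℝ≥0∞} [Fact (1 ≤ p)]
    (T : Lp I p →L[ℝ] Lp I p) : Prop :=
  ∀ f g : Lp I p, (∀ i, 0 ≤ f i) → (∀ i, 0 ≤ g i) → MajS f g → MajS (T f) (T g)

end

/-!
The Ky Fan sums `topSum f n` (the sum of the `n` largest entries) can only decrease under a
doubly substochastic operator, by the bathtub principle; so `f ≺_w g` and `g ≺_w f` force equal
Ky Fan sums. For nonnegative `f ∈ ℓᵖ` these determine, for every `t > 0`, how many entries are
`≥ t`, hence the size of every nonzero fibre. Equality of Ky Fan sums also forces the operator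
`D` with `f = D g` to be full on the superlevel blocks, so a doubly stochastic majorant of `D`
is block diagonal with respect to zero sets and supports; comparing its mass on the two blocks
matches the zero sets, whose complements are countable. Gluing the fibre bijections yields the
permutation.
-/

open Finset

section Basis

variable {I : Type*} {p : ℝ≥0∞}

lemma stdVec_apply [DecidableEq I] (j i : I) :
    (stdVec p j : Lp I p) i = if i = j then 1 else 0 := by
  simp only [stdVec, lp.single_apply, Pi.single_apply]
  congr

lemma stdVec_nonneg (j i : I) : 0 ≤ (stdVec p j : Lp I p) i := by
  classical
  rw [stdVec_apply]
  split_ifs <;> norm_num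

lemma lp_single_eq_smul_stdVec [DecidableEq I] (j : I) (a : ℝ) :
    lp.single p j a = a • (stdVec p j : Lp I p) := by
  ext i
  simp [stdVec_apply, lp.single_apply, Pi.single_apply]

variable [Fact (1 ≤ p)]

theorem hasSum_mul_apply_stdVec (hp : p ≠ ∞) (A : Lp I p →L[ℝ] Lp I p) (f : Lp I p) (i : I) :
    HasSum (fun j ↦ f j * A (stdVec p j) i) (A f i) := by
  classical
  have h := (lp.hasSum_single hp f).mapL ((lp.evalCLM ℝ (fun _ : I ↦ ℝ) p i).comp A)
  simpa [lp_single_eq_smul_stdVec, lp.evalCLM] using h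

lemma IsPos.apply_stdVec_nonneg {A : Lp I p →L[ℝ] Lp I p} (hA : IsPos A) (i j : I) :
    0 ≤ A (stdVec p j) i :=
  hA _ (stdVec_nonneg j) i

lemma DoublyStochastic.increasableDsS {A : Lp I p →L[ℝ] Lp I p} (hA : DoublyStochastic A) :
    IncreasableDsS A :=
  ⟨hA.1, A, hA, fun _ _ ↦ le_rfl⟩

lemma IncreasableDsS.doublySubstochastic {A : Lp I p →L[ℝ] Lp I p} (hA : IncreasableDsS A) :
    DoublySubstochastic A := by
  obtain ⟨hpos, A₁, ⟨hpos₁, hrow, hcol⟩, hle⟩ := hA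
  refine ⟨hpos, fun i s ↦ ?_, fun j s ↦ ?_⟩
  · exact (sum_le_sum fun j _ ↦ hle i j).trans
      (sum_le_hasSum s (fun j _ ↦ hpos₁.apply_stdVec_nonneg i j) (hrow i))
  · exact (sum_le_sum fun i _ ↦ hle i j).trans
      (sum_le_hasSum s (fun i _ ↦ hpos₁.apply_stdVec_nonneg i j) (hcol j))

end Basis

section Permutation

variable {I : Type*} {p : ℝ≥0∞} [Fact (1 ≤ p)]

noncomputable def permOp (hp : p ≠ ∞) (θ : I ≃ I) : Lp I p →L[ℝ] Lp I p :=
  have hp₀ : 0 < p.toReal := (ENNReal.toReal_pos_iff_ne_top p).2 hp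
  LinearMap.mkContinuous
    { toFun := fun f ↦ ⟨fun i ↦ f (θ i), memℓp_gen <| θ.summable_iff.2 <| (lp.memℓp f).summable hp₀⟩
      map_add' := fun _ _ ↦ rfl
      map_smul' := fun _ _ ↦ rfl } 1
    fun f ↦ by
      rw [one_mul, lp.norm_eq_tsum_rpow hp₀, lp.norm_eq_tsum_rpow hp₀]
      exact le_of_eq (congrArg (· ^ (1 / p.toReal)) (θ.tsum_eq fun i ↦ ‖f i‖ ^ p.toReal))

variable (hp : p ≠ ∞)

@[simp]
lemma permOp_apply (θ : I ≃ I) (f : Lp I p) (i : I) : permOp hp θ f i = f (θ i) := rfl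

lemma permOp_symm_permOp (θ : I ≃ I) (f : Lp I p) : permOp hp θ.symm (permOp hp θ f) = f := by
  ext i
  simp

lemma permOp_stdVec (θ : I ≃ I) (j : I) : permOp hp θ (stdVec p j) = stdVec p (θ.symm j) := by
  classical
  ext i
  simp only [permOp_apply, stdVec_apply, Equiv.eq_symm_apply]

lemma isPermutationOp_permOp (θ : I ≃ I) : IsPermutationOp (permOp hp θ) :=
  ⟨θ.symm, permOp_stdVec hp θ⟩

lemma doublyStochastic_permOp (θ : I ≃ I) : DoublyStochastic (permOp hp θ) := by
  classical
  refine ⟨fun f hf i ↦ hf (θ i), fun i ↦ ?_, fun j ↦ ?_⟩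
  · simp only [permOp_apply, stdVec_apply, eq_comm (a := θ i)]
    exact hasSum_ite_eq (θ i) 1
  · simp only [permOp_stdVec, stdVec_apply]
    exact hasSum_ite_eq (θ.symm j) 1

lemma IsPermutationOp.exists_eq_permOp {P : Lp I p →L[ℝ] Lp I p} (hP : IsPermutationOp P) :
    ∃ θ : I ≃ I, P = permOp hp θ := by
  classical
  obtain ⟨θ, hθ⟩ := hP
  refine ⟨θ.symm, ContinuousLinearMap.ext fun f ↦ lp.ext <| funext fun i ↦ ?_⟩
  refine (hasSum_mul_apply_stdVec hp P f i).unique ?_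
  simp only [hθ, stdVec_apply, eq_comm (a := i), ← Equiv.eq_symm_apply, mul_ite, mul_one,
    mul_zero, permOp_apply]
  convert hasSum_single (θ.symm i) fun j (hj : j ≠ θ.symm i) ↦ if_neg hj
  rw [if_pos rfl]

end Permutation

section TopSum

variable {I : Type*} {p : ℝ≥0∞}

/-- The Ky Fan functional: for `f ≥ 0`, the sum of the `n` largest entries of `f`. -/
noncomputable def topSum (f : Lp I p) (n : ℕ) : ℝ :=
  sSup ((fun s : Finset I ↦ ∑ i ∈ s, f i) '' {s | s.card ≤ n})

lemma topSum_le {f : Lp I p} {n : ℕ} {x : ℝ}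
    (h : ∀ s : Finset I, s.card ≤ n → ∑ i ∈ s, f i ≤ x) : topSum f n ≤ x :=
  csSup_le ⟨_, ∅, Nat.zero_le n, rfl⟩ fun _ ⟨s, hs, hx⟩ ↦ hx ▸ h s hs

variable [Fact (1 ≤ p)]

lemma sum_le_topSum (f : Lp I p) {s : Finset I} {n : ℕ} (hs : s.card ≤ n) :
    ∑ i ∈ s, f i ≤ topSum f n := by
  refine le_csSup ⟨n * ‖f‖, ?_⟩ ⟨s, hs, rfl⟩
  rintro _ ⟨t, ht, rfl⟩
  have hp₀ : p ≠ 0 := (zero_lt_one.trans_le Fact.out).ne'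
  calc ∑ i ∈ t, f i ≤ ∑ _i ∈ t, ‖f‖ :=
        sum_le_sum fun i _ ↦ (le_abs_self _).trans (lp.norm_apply_le_norm hp₀ f i)
    _ = t.card * ‖f‖ := by rw [sum_const, nsmul_eq_mul]
    _ ≤ n * ‖f‖ := by gcongr; exact_mod_cast ht

lemma topSum_mono (f : Lp I p) {m n : ℕ} (h : m ≤ n) : topSum f m ≤ topSum f n :=
  topSum_le fun _ hs ↦ sum_le_topSum f (hs.trans h)

lemma topSum_card_succ_le {g : Lp I p} {G : Finset I} {β : ℝ} (hβ₀ : 0 ≤ β)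
    (hβ : ∀ j ∉ G, g j ≤ β) : topSum g (G.card + 1) ≤ topSum g G.card + β := by
  classical
  refine topSum_le fun s hs ↦ ?_
  by_cases hsG : s ⊆ G
  · linarith [sum_le_topSum g (card_le_card hsG)]
  · obtain ⟨j, hjs, hjG⟩ := not_subset.1 hsG
    have := sum_le_topSum g (n := G.card) (s := s.erase j) (by rw [card_erase_of_mem hjs]; omega)
    rw [← sum_erase_add s _ hjs]
    linarith [hβ j hjG]

lemma topSum_add_le_topSum_succ {f : Lp I p} {F : Finset I} {t : ℝ} {m : ℕ} (hm : m < F.card)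
    (hF : ∀ i ∈ F, t ≤ f i) : topSum f m + t ≤ topSum f (m + 1) := by
  classical
  rw [← le_sub_iff_add_le]
  refine topSum_le fun s hs ↦ ?_
  obtain ⟨i, hiF, his⟩ := not_subset.1 fun h ↦ (card_le_card h).not_gt (hs.trans_lt hm)
  have := sum_le_topSum f (n := m + 1) (s := insert i s) ((card_insert_le _ _).trans (by omega))
  rw [sum_insert his] at this
  linarith [hF i hiF]

lemma sum_eq_topSum_card {f : Lp I p} {F : Finset I} {t : ℝ} (ht : 0 ≤ t) (hF : ∀ i ∈ F, t ≤ f i)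
    (hFc : ∀ i ∉ F, f i < t) : ∑ i ∈ F, f i = topSum f F.card := by
  classical
  refine le_antisymm (sum_le_topSum f le_rfl) (topSum_le fun s hs ↦ ?_)
  have hcard : ((s \ F).card : ℝ) ≤ (F \ s).card := by
    exact_mod_cast card_sdiff_le_card_sdiff_iff.2 hs
  calc ∑ i ∈ s, f i = ∑ i ∈ s ∩ F, f i + ∑ i ∈ s \ F, f i := (sum_inter_add_sum_sdiff s F f).symm
    _ ≤ ∑ i ∈ s ∩ F, f i + (s \ F).card * t := by
        grw [sum_le_card_nsmul (s \ F) f t fun i hi ↦ (hFc i (mem_sdiff.1 hi).2).le, nsmul_eq_mul]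
    _ ≤ ∑ i ∈ F ∩ s, f i + (F \ s).card * t := by
        rw [inter_comm]; gcongr
    _ ≤ ∑ i ∈ F ∩ s, f i + ∑ i ∈ F \ s, f i := by
        grw [← card_nsmul_le_sum (F \ s) f t fun i hi ↦ hF i (mem_sdiff.1 hi).1, nsmul_eq_mul]
    _ = ∑ i ∈ F, f i := sum_inter_add_sum_sdiff F s f

end TopSum

section Weights

variable {I : Type*}

lemma Finset.exists_subset_card_eq_min_forall_le [DecidableEq I] (g : I → ℝ) (n : ℕ)
    (t : Finset I) :
    ∃ u ⊆ t, u.card = min n t.card ∧ ∀ j ∈ u, ∀ k ∈ t \ u, g k ≤ g j := by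
  induction n generalizing t with
  | zero => exact ⟨∅, empty_subset _, by simp, by simp⟩
  | succ n ih =>
    rcases t.eq_empty_or_nonempty with rfl | ht
    · exact ⟨∅, empty_subset _, by simp, by simp⟩
    obtain ⟨j₀, hj₀, hmax⟩ := t.exists_max_image g ht
    obtain ⟨u, hut, hu, hgu⟩ := ih (t.erase j₀)
    have hj₀u : j₀ ∉ u := fun h ↦ (mem_erase.1 (hut h)).1 rfl
    refine ⟨insert j₀ u, insert_subset hj₀ (hut.trans (erase_subset _ _)), ?_, ?_⟩
    · rw [card_insert_of_notMem hj₀u, hu, card_erase_of_mem hj₀]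
      have := card_pos.2 ht
      omega
    · intro j hj k hk
      obtain ⟨hkt, hku⟩ := mem_sdiff.1 hk
      rcases mem_insert.1 hj with rfl | hju
      · exact hmax k hkt
      · exact hgu j hju k (mem_sdiff.2 ⟨mem_erase.2 ⟨fun h ↦ hku (h ▸ mem_insert_self _ _), hkt⟩,
          fun h ↦ hku (mem_insert_of_mem h)⟩)

/-- Bathtub principle. -/
lemma exists_subset_sum_mul_le_sum {c g : I → ℝ} {t : Finset I} {n : ℕ} (hg : ∀ j ∈ t, 0 ≤ g j)
    (hc₀ : ∀ j ∈ t, 0 ≤ c j) (hc₁ : ∀ j ∈ t, c j ≤ 1) (hcn : ∑ j ∈ t, c j ≤ n) :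
    ∃ u ⊆ t, u.card ≤ n ∧ ∑ j ∈ t, c j * g j ≤ ∑ j ∈ u, g j := by
  classical
  obtain ⟨u, hut, hu, hgu⟩ := t.exists_subset_card_eq_min_forall_le g n
  refine ⟨u, hut, hu ▸ min_le_left _ _, ?_⟩
  obtain ⟨m, hm₀, hmu, hmt⟩ : ∃ m, 0 ≤ m ∧ (∀ j ∈ u, m ≤ g j) ∧ ∀ k ∈ t \ u, g k ≤ m := by
    rcases (t \ u).eq_empty_or_nonempty with h | h
    · exact ⟨0, le_rfl, fun j hj ↦ hg j (hut hj), by simp [h]⟩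
    · obtain ⟨k, hk, hmax⟩ := (t \ u).exists_max_image g h
      exact ⟨g k, hg k (sdiff_subset hk), fun j hj ↦ hgu j hj k hk, hmax⟩
  have hweights : ∑ k ∈ t \ u, c k ≤ ∑ j ∈ u, (1 - c j) := by
    rcases le_total t.card n with htn | hnt
    · obtain rfl : u = t := eq_of_subset_of_card_le hut (by omega)
      simpa using sum_nonneg fun j hj ↦ sub_nonneg.2 (hc₁ j hj)
    · rw [sum_sub_distrib, sum_const, hu, min_eq_left hnt, nsmul_one]
      linarith [sum_sdiff hut (f := c)]
  calc ∑ j ∈ t, c j * g j = ∑ k ∈ t \ u, c k * g k + ∑ j ∈ u, c j * g j := (sum_sdiff hut).symm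
    _ ≤ m * ∑ k ∈ t \ u, c k + ∑ j ∈ u, c j * g j := by
        rw [mul_sum]
        gcongr ?_ + _
        exact sum_le_sum fun k hk ↦ by
          rw [mul_comm m]
          exact mul_le_mul_of_nonneg_left (hmt k hk) (hc₀ k (sdiff_subset hk))
    _ ≤ ∑ j ∈ u, m * (1 - c j) + ∑ j ∈ u, c j * g j := by rw [← mul_sum]; gcongr
    _ ≤ ∑ j ∈ u, g j := by
        rw [← sum_add_distrib]
        gcongr with j hj
        nlinarith [hmu j hj, hc₁ j (hut hj)]

end Weights

section Substochastic

variable {I : Type*} {p : ℝ≥0∞} [Fact (1 ≤ p)]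

lemma hasSum_sum_apply_stdVec_mul (hp : p ≠ ∞) (A : Lp I p →L[ℝ] Lp I p) (g : Lp I p)
    (s : Finset I) : HasSum (fun j ↦ (∑ i ∈ s, A (stdVec p j) i) * g j) (∑ i ∈ s, A g i) := by
  convert hasSum_sum fun i _ ↦ hasSum_mul_apply_stdVec hp A g i using 2 with j
  rw [sum_mul]
  exact sum_congr rfl fun _ _ ↦ mul_comm _ _

variable {A : Lp I p →L[ℝ] Lp I p}

lemma DoublySubstochastic.sum_sum_le_card (hA : DoublySubstochastic A) (s u : Finset I) :
    ∑ j ∈ u, ∑ i ∈ s, A (stdVec p j) i ≤ s.card := by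
  rw [sum_comm]
  simpa using sum_le_sum fun i (_ : i ∈ s) ↦ hA.2.1 i u

lemma DoublySubstochastic.sum_apply_le_topSum (hp : p ≠ ∞) (hA : DoublySubstochastic A)
    {g : Lp I p} (hg : ∀ i, 0 ≤ g i) (s : Finset I) : ∑ i ∈ s, A g i ≤ topSum g s.card := by
  refine hasSum_le_of_sum_le (hasSum_sum_apply_stdVec_mul hp A g s) fun t ↦ ?_
  obtain ⟨u, -, hu, hle⟩ := exists_subset_sum_mul_le_sum (fun j _ ↦ hg j)
    (fun j _ ↦ sum_nonneg fun i _ ↦ hA.1.apply_stdVec_nonneg i j) (fun j _ ↦ hA.2.2 j s)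
    (hA.sum_sum_le_card s t)
  exact hle.trans (sum_le_topSum g hu)

lemma MajW.topSum_le_topSum (hp : p ≠ ∞) {f g : Lp I p} (hg : ∀ i, 0 ≤ g i) (h : MajW f g) (n : ℕ) :
    topSum f n ≤ topSum g n := by
  obtain ⟨A, hA, rfl⟩ := h
  exact topSum_le fun s hs ↦ (hA.sum_apply_le_topSum hp hg s).trans (topSum_mono g hs)

end Substochastic

section Superlevel

variable {I : Type*} {p : ℝ≥0∞} [Fact (1 ≤ p)]

lemma finite_setOf_le_apply (hp : p ≠ ∞) (f : Lp I p) {t : ℝ} (ht : 0 < t) :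
    {i | t ≤ f i}.Finite := by
  have hp₀ : 0 < p.toReal := (ENNReal.toReal_pos_iff_ne_top p).2 hp
  refine (Filter.eventually_cofinite.1 <| ((lp.memℓp f).summable hp₀).tendsto_cofinite_zero
    |>.eventually_lt_const (Real.rpow_pos_of_pos ht p.toReal)).subset fun i hi ↦ ?_
  exact not_lt.2 (Real.rpow_le_rpow ht.le (hi.trans (le_abs_self _)) hp₀.le)

lemma countable_setOf_ne_zero (hp : p ≠ ∞) (f : Lp I p) : {i | f i ≠ 0}.Countable := by
  have hp₀ : 0 < p.toReal := (ENNReal.toReal_pos_iff_ne_top p).2 hp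
  exact ((lp.memℓp f).summable hp₀).countable_support.mono fun i hi ↦
    (Real.rpow_pos_of_pos (norm_pos_iff.2 hi) _).ne'

/-- `{i | t ≤ f i}` as a finset: junk `∅` when that set is infinite, which can happen only for
`t ≤ 0`. -/
noncomputable def superlevel (f : Lp I p) (t : ℝ) : Finset I :=
  haveI := Classical.propDecidable
  if h : {i | t ≤ f i}.Finite then h.toFinset else ∅

variable (hp : p ≠ ∞)
include hp

lemma mem_superlevel {f : Lp I p} {t : ℝ} (ht : 0 < t) {i : I} :
    i ∈ superlevel f t ↔ t ≤ f i := by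
  rw [superlevel, dif_pos (finite_setOf_le_apply hp f ht), Set.Finite.mem_toFinset]
  rfl

lemma exists_gap_below (g : Lp I p) {t : ℝ} (ht : 0 < t) :
    ∃ β, 0 ≤ β ∧ β < t ∧ ∀ j, g j < t → g j ≤ β := by
  classical
  set T := insert (t / 2) (((superlevel g (t / 2)).filter (g · < t)).image g)
  have hT : T.Nonempty := insert_nonempty _ _
  refine ⟨T.max' hT, (half_pos ht).le.trans (T.le_max' _ (mem_insert_self _ _)),
    (T.max'_lt_iff hT).2 ?_, fun j hj ↦ ?_⟩
  · simp only [T, mem_insert, mem_image, mem_filter]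
    rintro _ (rfl | ⟨j, ⟨-, hj⟩, rfl⟩)
    exacts [half_lt_self ht, hj]
  · rcases le_or_gt (t / 2) (g j) with h | h
    · exact T.le_max' _ (mem_insert_of_mem (mem_image_of_mem g
        (mem_filter.2 ⟨(mem_superlevel hp (half_pos ht)).2 h, hj⟩)))
    · exact h.le.trans (T.le_max' _ (mem_insert_self _ _))

lemma exists_gap_above (f : Lp I p) {v : ℝ} (hv : 0 < v) :
    ∃ δ > 0, ∀ i, v < f i → v + δ ≤ f i := by
  classical
  set T := insert (v + 1) (((superlevel f v).filter (v < f ·)).image f)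
  have hT : T.Nonempty := insert_nonempty _ _
  refine ⟨T.min' hT - v, sub_pos.2 ((T.lt_min'_iff hT).2 ?_), fun i hi ↦ ?_⟩
  · simp only [T, mem_insert, mem_image, mem_filter]
    rintro _ (rfl | ⟨i, ⟨-, hi⟩, rfl⟩)
    exacts [lt_add_one v, hi]
  · rw [add_sub_cancel]
    exact T.min'_le _ (mem_insert_of_mem (mem_image_of_mem f
      (mem_filter.2 ⟨(mem_superlevel hp hv).2 hi.le, hi⟩)))

lemma sum_superlevel_eq_topSum {f : Lp I p} {t : ℝ} (ht : 0 < t) :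
    ∑ i ∈ superlevel f t, f i = topSum f (superlevel f t).card :=
  sum_eq_topSum_card ht.le (fun _ ↦ (mem_superlevel hp ht).1)
    fun _ hi ↦ not_le.1 (mt (mem_superlevel hp ht).2 hi)

lemma card_superlevel_le_of_topSum_eq {f g : Lp I p} (heq : ∀ n, topSum f n = topSum g n)
    {t : ℝ} (ht : 0 < t) : (superlevel f t).card ≤ (superlevel g t).card := by
  by_contra! hlt
  obtain ⟨β, hβ₀, hβt, hβ⟩ := exists_gap_below hp g ht
  have hg := topSum_card_succ_le (g := g) (G := superlevel g t) hβ₀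
    fun j hj ↦ hβ j (not_le.1 (mt (mem_superlevel hp ht).2 hj))
  have hf := topSum_add_le_topSum_succ hlt fun _ ↦ (mem_superlevel hp ht).1
  linarith [heq (superlevel g t).card, heq ((superlevel g t).card + 1)]

lemma card_superlevel_eq_of_topSum_eq {f g : Lp I p} (heq : ∀ n, topSum f n = topSum g n)
    {t : ℝ} (ht : 0 < t) : (superlevel f t).card = (superlevel g t).card :=
  le_antisymm (card_superlevel_le_of_topSum_eq hp heq ht)
    (card_superlevel_le_of_topSum_eq hp (fun n ↦ (heq n).symm) ht)

end Superlevel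

section Rigidity

variable {I : Type*}

lemma eq_zero_of_hasSum_one_of_one_le_sum {a : I → ℝ} (ha : ∀ i, 0 ≤ a i) (h : HasSum a 1)
    {F : Finset I} (hF : 1 ≤ ∑ i ∈ F, a i) {i : I} (hi : i ∉ F) : a i = 0 := by
  classical
  have := sum_le_hasSum (insert i F) (fun j _ ↦ ha j) h
  rw [sum_insert hi] at this
  linarith [ha i]

/-- Equality in the bathtub bound forces the weights to be full on the top values. -/
lemma eq_one_of_hasSum_mul_eq_sum {c g : I → ℝ} {G : Finset I} {β : ℝ} (hβ₀ : 0 ≤ β)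
    (hgG : ∀ j ∈ G, β < g j) (hgβ : ∀ j ∉ G, g j ≤ β) (hc₀ : ∀ j, 0 ≤ c j) (hc₁ : ∀ j, c j ≤ 1)
    (hcG : ∀ u : Finset I, ∑ j ∈ u, c j ≤ G.card)
    (hsum : HasSum (fun j ↦ c j * g j) (∑ j ∈ G, g j)) {j : I} (hj : j ∈ G) : c j = 1 := by
  classical
  have hle : ∑ j ∈ G, g j ≤ ∑ j ∈ G, c j * g j + β * (G.card - ∑ j ∈ G, c j) := by
    refine hasSum_le_of_sum_le hsum fun u ↦ ?_
    have h₁ : ∑ j ∈ u, c j * g j ≤ ∑ j ∈ u ∪ G, c j * g j :=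
      sum_le_sum_of_subset_of_nonneg subset_union_left fun k hk hku ↦
        mul_nonneg (hc₀ k) (hβ₀.trans (hgG k (by simpa [hku] using hk)).le)
    have h₂ : ∑ k ∈ (u ∪ G) \ G, c k * g k ≤ β * ∑ k ∈ (u ∪ G) \ G, c k := by
      rw [mul_sum]
      exact sum_le_sum fun k hk ↦ by
        rw [mul_comm β]
        exact mul_le_mul_of_nonneg_left (hgβ k (mem_sdiff.1 hk).2) (hc₀ k)
    have h₃ := hcG (u ∪ G)
    rw [← sum_sdiff subset_union_right] at h₁ h₃
    have h₄ : β * ∑ k ∈ (u ∪ G) \ G, c k ≤ β * (G.card - ∑ j ∈ G, c j) :=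
      mul_le_mul_of_nonneg_left (by linarith) hβ₀
    linarith
  have hterm : ∀ k ∈ G, 0 ≤ (1 - c k) * (g k - β) := fun k hk ↦
    mul_nonneg (sub_nonneg.2 (hc₁ k)) (sub_nonneg.2 (hgG k hk).le)
  have hzero : ∑ k ∈ G, (1 - c k) * (g k - β) = 0 := by
    refine le_antisymm ?_ (sum_nonneg hterm)
    have : ∑ k ∈ G, (1 - c k) * (g k - β)
        = ∑ j ∈ G, g j - (∑ j ∈ G, c j * g j + β * (G.card - ∑ j ∈ G, c j)) := by
      simp only [fun k ↦ show (1 - c k) * (g k - β) = g k - c k * g k - β + β * c k by ring,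
        sum_add_distrib, sum_sub_distrib, sum_const, nsmul_eq_mul, ← mul_sum]
      ring
    linarith
  rcases mul_eq_zero.1 ((sum_eq_zero_iff_of_nonneg hterm).1 hzero j hj) with h | h
  · linarith
  · linarith [hgG j hj]

variable {p : ℝ≥0∞} [Fact (1 ≤ p)] {A : Lp I p →L[ℝ] Lp I p}

theorem DoublySubstochastic.sum_apply_stdVec_superlevel_eq_one (hp : p ≠ ∞)
    (hA : DoublySubstochastic A) {g : Lp I p} (heq : ∀ n, topSum (A g) n = topSum g n)
    {t : ℝ} (ht : 0 < t) :
    (∀ j ∈ superlevel g t, ∑ i ∈ superlevel (A g) t, A (stdVec p j) i = 1) ∧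
      ∀ i ∈ superlevel (A g) t, ∑ j ∈ superlevel g t, A (stdVec p j) i = 1 := by
  set F := superlevel (A g) t
  set G := superlevel g t
  have hcard : F.card = G.card := card_superlevel_eq_of_topSum_eq hp heq ht
  have hsum : ∑ i ∈ F, A g i = ∑ j ∈ G, g j := by
    rw [sum_superlevel_eq_topSum hp ht, sum_superlevel_eq_topSum hp ht, hcard, heq]
  obtain ⟨β, hβ₀, hβt, hβ⟩ := exists_gap_below hp g ht
  have hcol : ∀ j ∈ G, ∑ i ∈ F, A (stdVec p j) i = 1 :=
    fun j ↦ eq_one_of_hasSum_mul_eq_sum hβ₀ (fun k hk ↦ hβt.trans_le ((mem_superlevel hp ht).1 hk))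
      (fun k hk ↦ hβ k (not_le.1 (mt (mem_superlevel hp ht).2 hk)))
      (fun k ↦ sum_nonneg fun i _ ↦ hA.1.apply_stdVec_nonneg i k) (fun k ↦ hA.2.2 k F)
      (fun u ↦ hcard ▸ hA.sum_sum_le_card F u) (hsum ▸ hasSum_sum_apply_stdVec_mul hp A g F)
  refine ⟨hcol, (sum_eq_sum_iff_of_le fun i _ ↦ hA.2.1 i G).1 ?_⟩
  rw [sum_comm, sum_congr rfl hcol]
  simp [hcard]

end Rigidity

section Counting

variable {I J : Type*}

/-- A doubly stochastic matrix vanishing on `Z × Wᶜ` carries the unit mass of each row of `Z`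
into the columns of `W`, each of which absorbs at most one unit. -/
lemma encard_le_encard_of_forall_eq_zero {a : I → J → ℝ} (ha : ∀ i j, 0 ≤ a i j)
    (hrow : ∀ i, HasSum (a i) 1) (hcol : ∀ j, HasSum (a · j) 1) {Z : Set I} {W : Set J}
    (hZW : ∀ i ∈ Z, ∀ j ∉ W, a i j = 0) : Z.encard ≤ W.encard := by
  classical
  by_contra! hlt
  have hW : W.Finite := Set.encard_lt_top_iff.1 (hlt.trans_le le_top)
  obtain ⟨s, hsZ, hs⟩ := Set.exists_subset_encard_eq (Order.add_one_le_of_lt hlt)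
  rw [hW.encard_eq_coe_toFinset_card] at hs
  have hsf : s.Finite := Set.finite_of_encard_eq_coe (k := hW.toFinset.card + 1) (by simp [hs])
  have hmass : HasSum (fun j ↦ ∑ i ∈ hsf.toFinset, a i j) hsf.toFinset.card := by
    simpa using hasSum_sum fun i (_ : i ∈ hsf.toFinset) ↦ hrow i
  have hW' : HasSum (fun j ↦ ∑ i ∈ hsf.toFinset, a i j)
      (∑ j ∈ hW.toFinset, ∑ i ∈ hsf.toFinset, a i j) :=
    hasSum_sum_of_ne_finset_zero fun j hj ↦ sum_eq_zero fun i hi ↦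
      hZW i (hsZ (hsf.mem_toFinset.1 hi)) j (mt hW.mem_toFinset.2 hj)
  have hle : (hsf.toFinset.card : ℝ) ≤ hW.toFinset.card := by
    rw [hmass.unique hW']
    simpa using sum_le_sum fun j (_ : j ∈ hW.toFinset) ↦
      sum_le_hasSum hsf.toFinset (fun i _ ↦ ha i j) (hcol j)
  rw [hsf.encard_eq_coe_toFinset_card] at hs
  norm_cast at hs hle
  omega

lemma Cardinal.mk_eq_of_countable_compl {s : Set I} (hs : s.Infinite) (hsc : sᶜ.Countable) :
    Cardinal.mk s = Cardinal.mk I := by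
  have := hs.to_subtype
  have hs₀ : Cardinal.aleph0 ≤ Cardinal.mk s := Cardinal.infinite_iff.1 this
  rw [← Cardinal.mk_sum_compl s, Cardinal.add_eq_left hs₀ (hsc.le_aleph0.trans hs₀)]

lemma Set.nonempty_equiv_of_encard_eq {Z W : Set I} (h : Z.encard = W.encard)
    (hZ : Zᶜ.Countable) (hW : Wᶜ.Countable) : Nonempty (Z ≃ W) := by
  rcases Z.finite_or_infinite with hZf | hZi
  · have hWf : W.Finite := Set.encard_lt_top_iff.1 (h ▸ hZf.encard_lt_top)
    have := hZf.to_subtype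
    have := hWf.to_subtype
    refine Finite.card_eq.1 ?_
    rw [Nat.card_coe_set_eq, Nat.card_coe_set_eq, Set.ncard, Set.ncard, h]
  · have hWi : W.Infinite := Set.encard_eq_top_iff.1 (h ▸ hZi.encard_eq)
    exact Cardinal.eq.1 ((Cardinal.mk_eq_of_countable_compl hZi hZ).trans
      (Cardinal.mk_eq_of_countable_compl hWi hW).symm)

variable {p : ℝ≥0∞} [Fact (1 ≤ p)]

lemma mem_superlevel_sdiff_iff [DecidableEq I] (hp : p ≠ ∞) {f : Lp I p} {v δ : ℝ} (hv : 0 < v)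
    (hδ : 0 < δ) (hgap : ∀ i, v < f i → v + δ ≤ f i) {i : I} :
    i ∈ superlevel f v \ superlevel f (v + δ) ↔ f i = v := by
  rw [mem_sdiff, mem_superlevel hp hv, mem_superlevel hp (by linarith)]
  constructor
  · rintro ⟨hvi, hvδ⟩
    exact (eq_or_lt_of_le hvi).elim Eq.symm fun h ↦ absurd (hgap i h) hvδ
  · rintro rfl
    exact ⟨le_rfl, by linarith⟩

lemma nonempty_fiber_equiv_of_card_superlevel_eq (hp : p ≠ ∞) {f g : Lp I p}
    (hf : ∀ i, 0 ≤ f i) (hg : ∀ i, 0 ≤ g i)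
    (hcard : ∀ t, 0 < t → (superlevel f t).card = (superlevel g t).card) {v : ℝ} (hv : v ≠ 0) :
    Nonempty ({i // f i = v} ≃ {i // g i = v}) := by
  classical
  rcases hv.lt_or_gt with hv | hv
  · have : IsEmpty {i // f i = v} := ⟨fun i ↦ (hf i).not_gt (i.2.trans_lt hv)⟩
    have : IsEmpty {i // g i = v} := ⟨fun i ↦ (hg i).not_gt (i.2.trans_lt hv)⟩
    exact ⟨Equiv.equivOfIsEmpty _ _⟩
  obtain ⟨δf, hδf, hgapf⟩ := exists_gap_above hp f hv
  obtain ⟨δg, hδg, hgapg⟩ := exists_gap_above hp g hv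
  set δ := min δf δg
  have hδ : 0 < δ := lt_min hδf hδg
  have hgapf' (i : I) (hi : v < f i) : v + δ ≤ f i := by linarith [hgapf i hi, min_le_left δf δg]
  have hgapg' (i : I) (hi : v < g i) : v + δ ≤ g i := by linarith [hgapg i hi, min_le_right δf δg]
  have hsub {h : Lp I p} : superlevel h (v + δ) ⊆ superlevel h v := fun i hi ↦
    (mem_superlevel hp hv).2 (by linarith [(mem_superlevel hp (by linarith)).1 hi])
  have hcard' : (superlevel f v \ superlevel f (v + δ)).card
      = (superlevel g v \ superlevel g (v + δ)).card := by
    rw [card_sdiff_of_subset hsub, card_sdiff_of_subset hsub, hcard v hv, hcard _ (by linarith)]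
  exact ⟨(Equiv.subtypeEquivRight fun _ ↦ (mem_superlevel_sdiff_iff hp hv hδ hgapf').symm).trans <|
    (Fintype.equivOfCardEq (by simp [hcard'])).trans <|
    Equiv.subtypeEquivRight fun _ ↦ mem_superlevel_sdiff_iff hp hv hδ hgapg'⟩

end Counting

section Forward

variable {I : Type*} {p : ℝ≥0∞} [Fact (1 ≤ p)]

/-- Equality of Ky Fan sums makes `D` full on the superlevel blocks, so the majorant `D₁` has no
mass between the zero set of `D g` and the support of `g`, nor between the support of `D g` and the
zero set of `g`. -/
theorem nonempty_equiv_zeroSet_of_topSum_eq (hp : p ≠ ∞) {D D₁ : Lp I p →L[ℝ] Lp I p}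
    (hD : DoublySubstochastic D) (hD₁ : DoublyStochastic D₁)
    (hDD₁ : ∀ i j, D (stdVec p j) i ≤ D₁ (stdVec p j) i) {g : Lp I p}
    (hf : ∀ i, 0 ≤ D g i) (hg : ∀ i, 0 ≤ g i) (heq : ∀ n, topSum (D g) n = topSum g n) :
    Nonempty ({i // D g i = 0} ≃ {j // g j = 0}) := by
  have hD₁₀ := hD₁.1.apply_stdVec_nonneg
  have hrig := fun t (ht : 0 < t) ↦ hD.sum_apply_stdVec_superlevel_eq_one hp heq ht
  have hZS (i j : I) (hi : D g i = 0) (hj : g j ≠ 0) : D₁ (stdVec p j) i = 0 := by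
    have hj := (hg j).lt_of_ne' hj
    refine eq_zero_of_hasSum_one_of_one_le_sum (hD₁₀ · j) (hD₁.2.2 j)
      (((hrig _ hj).1 j ((mem_superlevel hp hj).2 le_rfl)).symm.trans_le
        (sum_le_sum fun i _ ↦ hDD₁ i j)) fun h ↦ ?_
    exact ((mem_superlevel hp hj).1 h).not_gt (hi ▸ hj)
  have hSZ (i j : I) (hi : D g i ≠ 0) (hj : g j = 0) : D₁ (stdVec p j) i = 0 := by
    have hi := (hf i).lt_of_ne' hi
    refine eq_zero_of_hasSum_one_of_one_le_sum (hD₁₀ i) (hD₁.2.1 i)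
      (((hrig _ hi).2 i ((mem_superlevel hp hi).2 le_rfl)).symm.trans_le
        (sum_le_sum fun j _ ↦ hDD₁ i j)) fun h ↦ ?_
    exact ((mem_superlevel hp hi).1 h).not_gt (hj ▸ hi)
  refine Set.nonempty_equiv_of_encard_eq (le_antisymm ?_ ?_) (countable_setOf_ne_zero hp _)
    (countable_setOf_ne_zero hp g)
  · exact encard_le_encard_of_forall_eq_zero (a := fun i j ↦ D₁ (stdVec p j) i)
      (fun i j ↦ hD₁₀ i j) hD₁.2.1 hD₁.2.2 fun i hi j hj ↦ hZS i j hi hj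
  · exact encard_le_encard_of_forall_eq_zero (a := fun j i ↦ D₁ (stdVec p j) i)
      (fun j i ↦ hD₁₀ i j) hD₁.2.2 hD₁.2.1 fun j hj i hi ↦ hSZ i j hi hj

theorem exists_eq_permOp_of_majS_of_majW (hp : p ≠ ∞) {f g : Lp I p} (hf : ∀ i, 0 ≤ f i)
    (hg : ∀ i, 0 ≤ g i) (hfg : MajS f g) (hgf : MajW g f) : ∃ θ : I ≃ I, g = permOp hp θ f := by
  obtain ⟨D, hD, rfl⟩ := hfg
  have hDs := hD.doublySubstochastic
  obtain ⟨-, D₁, hD₁, hDD₁⟩ := hD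
  have heq n : topSum (D g) n = topSum g n :=
    le_antisymm (MajW.topSum_le_topSum hp hg ⟨D, hDs, rfl⟩ n)
      (hgf.topSum_le_topSum hp hf n)
  have hfiber (v : ℝ) : Nonempty ({i // D g i = v} ≃ {i // g i = v}) := by
    rcases eq_or_ne v 0 with rfl | hv
    · exact nonempty_equiv_zeroSet_of_topSum_eq hp hDs hD₁ hDD₁ hf hg heq
    · exact nonempty_fiber_equiv_of_card_superlevel_eq hp hf hg
        (fun t ht ↦ card_superlevel_eq_of_topSum_eq hp heq ht) hv
  obtain ⟨θ, hθ⟩ : ∃ θ : I ≃ I, ∀ i, g (θ i) = D g i :=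
    ⟨_, Equiv.ofFiberEquiv_map fun v ↦ (hfiber v).some⟩
  exact ⟨θ.symm, lp.ext <| funext fun i ↦ by simpa using hθ (θ.symm i)⟩

end Forward

theorem stmt_4_general {I : Type*} (p : ℝ≥0∞) [Fact (1 ≤ p)] (hp : p ≠ ∞)
    (f g : Lp I p) (hf : ∀ i, 0 ≤ f i) (hg : ∀ i, 0 ≤ g i) :
    (MajS f g ∧ MajW g f) ↔
      ∃ P : Lp I p →L[ℝ] Lp I p, IsPermutationOp P ∧ g = P f := by
  constructor
  · rintro ⟨hfg, hgf⟩
    obtain ⟨θ, rfl⟩ := exists_eq_permOp_of_majS_of_majW hp hf hg hfg hgf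
    exact ⟨_, isPermutationOp_permOp hp θ, rfl⟩
  · rintro ⟨P, hP, rfl⟩
    obtain ⟨θ, rfl⟩ := hP.exists_eq_permOp hp
    exact ⟨⟨permOp hp θ.symm, (doublyStochastic_permOp hp θ.symm).increasableDsS,
        (permOp_symm_permOp hp θ f).symm⟩,
      permOp hp θ, (doublyStochastic_permOp hp θ).increasableDsS.doublySubstochastic, rfl⟩

theorem stmt_4 {I : Type*} [Nonempty I] (p : ℝ≥0∞) [Fact (1 ≤ p)] (hp : p ≠ ∞)
    (f g : Lp I p) (hf : ∀ i, 0 ≤ f i) (hg : ∀ i, 0 ≤ g i) :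
    (MajS f g ∧ MajW g f) ↔
      ∃ P : Lp I p →L[ℝ] Lp I p, IsPermutationOp P ∧ g = P f :=
  stmt_4_general p hp f g hf hg
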